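/- Let G be a finite p-group and A ≤ Aut(G). If A fixes every element of order dividing p (dividing 4 if p = 2) in γ_i(G,A) for some i ≥ 1, then A is a p-group. -/

import Mathlib

open SemidirectProduct
open scoped commutatorElement

/-- Left-normed commutator `[x, l₁, l₂, …]`. -/
def lnc {S : Type*} [Group S] (x : S) (l : List S) : S :=
  l.foldl (fun c y => ⁅c, y⁆) x

/-- `γ_k(G,A)`: the subgroup of the semidirect product `G ⋊[φ] A` generated by all
left-normed commutators `[x₁,…,xₙ]` with `n ≥ k`, `x₁ ∈ G`, each `xᵢ ∈ G ∪ A`,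
and at least `k-1` of the `xᵢ` in `A`. -/
def gammaGA {G A : Type*} [Group G] [Group A] (φ : A →* MulAut G) (k : ℕ) :
    Subgroup (G ⋊[φ] A) :=
  Subgroup.closure {x | ∃ (g : G) (l : List (G ⋊[φ] A)),
      k ≤ l.length + 1 ∧
      (∀ y ∈ l, (∃ h : G, y = inl h) ∨ (∃ a : A, y = inr a)) ∧
      (∃ s : Finset (Fin l.length), k - 1 ≤ s.card ∧
        ∀ i ∈ s, ∃ a : A, l.get i = inr a) ∧
      x = lnc (inl g) l}

/-!
The core is a statement about coprime automorphisms: if `α` is an automorphism of a finite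
`p`-group `P` with `α ^ n = 1` for some `n` prime to `p`, and `α` fixes every `x` with
`x ^ p = 1` (`x ^ 4 = 1` if `p = 2`), then `α = 1`.

Write `c x = x * (α x)⁻¹`. If `c x` is fixed then `(α ^ k) x = (c x)⁻¹ ^ k * x`, so
`c x ^ n = 1` and `α x = x`. In a minimal counterexample every proper `α`-invariant subgroup is
fixed pointwise, in particular `P'`. Hence the `c x` are not all fixed, so they generate `P`;
they commute with every `t ∈ P'` (compare `⁅t, x⁻¹⁆` with its image under `α`), so `P'` is
central. Pick `x` not fixed with `x ^ p` fixed: `x` and `α x` have the same `p`-th power, so the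
class-two power formula gives `c x ^ p = 1` (`c x ^ 4 = 1` if `p = 2`). Thus `c x` is fixed,
hence so is `x`.

For the theorem, let `a ∈ A` have prime order `q ≠ p`. The elements `[g, a, …, a]` with
`i - 1` copies of `a` lie in `γ_i(G, A)` and generate an `a`-invariant subgroup, which `a`
therefore fixes pointwise. Removing one `a` at a time by the argument above, `a` fixes `G`.
-/

theorem IsPGroup.eq_one_of_pow_eq_one {P : Type*} [Group P] {p n : ℕ} (hP : IsPGroup p P)
    (hn : p.Coprime n) {x : P} (hx : x ^ n = 1) : x = 1 :=
  (hP.powEquiv hn).injective (by simp [hx])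

theorem IsPGroup.exists_pow_mem_of_ne_top {P : Type*} [Group P] {p : ℕ} (hP : IsPGroup p P)
    {H : Subgroup P} (hH : H ≠ ⊤) : ∃ x ∉ H, x ^ p ∈ H := by
  classical
  obtain ⟨z, hz⟩ : ∃ z, z ∉ H := by simpa [Subgroup.eq_top_iff'] using hH
  have hex : ∃ m, z ^ p ^ m ∈ H := (hP z).imp fun _ hk => by rw [hk]; exact H.one_mem
  have hm : Nat.find hex ≠ 0 := fun h => hz (by simpa [h] using Nat.find_spec hex)
  refine ⟨z ^ p ^ (Nat.find hex - 1), Nat.find_min hex (by omega), ?_⟩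
  rw [← pow_mul, ← pow_succ, Nat.sub_add_cancel (Nat.pos_of_ne_zero hm)]
  exact Nat.find_spec hex

theorem IsPGroup.of_forall_prime_pow_eq_one {A : Type*} [Group A] [Finite A] {p : ℕ}
    (h : ∀ q : ℕ, q.Prime → q ≠ p → ∀ a : A, a ^ q = 1 → a = 1) : IsPGroup p A := by
  refine IsPGroup.of_card (Nat.eq_prime_pow_of_unique_prime_dvd Nat.card_pos.ne' ?_)
  intro q hq hdvd
  by_contra hqp
  have : Fact q.Prime := ⟨hq⟩
  obtain ⟨a, ha⟩ := exists_prime_orderOf_dvd_card' q hdvd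
  have : a = 1 := h q hq hqp a (ha ▸ pow_orderOf_eq_one a)
  exact hq.one_lt.ne' (ha ▸ this ▸ orderOf_one)

section ClassTwo

variable {G : Type*} [Group G] {a b : G}

theorem pow_mul_eq_of_commutatorElement_mem_center (h : ⁅b, a⁆ ∈ Subgroup.center G)
    (n : ℕ) : b ^ n * a = ⁅b, a⁆ ^ n * a * b ^ n := by
  have hc (g : G) : Commute g ⁅b, a⁆ := Subgroup.mem_center_iff.mp h g
  induction n with
  | zero => simp
  | succ n ih =>
    calc b ^ (n + 1) * a = b ^ n * ⁅b, a⁆ * a * b := by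
          simp only [pow_succ, commutatorElement_def]; group
      _ = ⁅b, a⁆ * (b ^ n * a) * b := by rw [(hc _).eq]; group
      _ = ⁅b, a⁆ ^ (n + 1) * a * b ^ (n + 1) := by rw [ih]; group

theorem commutatorElement_pow_left_of_mem_center (h : ⁅b, a⁆ ∈ Subgroup.center G) (n : ℕ) :
    ⁅b ^ n, a⁆ = ⁅b, a⁆ ^ n := by
  rw [commutatorElement_def, pow_mul_eq_of_commutatorElement_mem_center h]; group

theorem mul_pow_of_commutatorElement_mem_center (h : ⁅b, a⁆ ∈ Subgroup.center G) (n : ℕ) :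
    (a * b) ^ n = ⁅b, a⁆ ^ n.choose 2 * a ^ n * b ^ n := by
  have hc (g : G) : Commute g ⁅b, a⁆ := Subgroup.mem_center_iff.mp h g
  induction n with
  | zero => simp
  | succ n ih =>
    calc (a * b) ^ (n + 1) = ⁅b, a⁆ ^ n.choose 2 * a ^ n * (b ^ n * a) * b := by
          rw [pow_succ, ih]; group
      _ = ⁅b, a⁆ ^ n.choose 2 * (a ^ n * ⁅b, a⁆ ^ n) * a * b ^ (n + 1) := by
          rw [pow_mul_eq_of_commutatorElement_mem_center h]; group
      _ = ⁅b, a⁆ ^ (n + 1).choose 2 * a ^ (n + 1) * b ^ (n + 1) := by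
          rw [((hc _).pow_right n).eq, Nat.choose_succ_succ', Nat.choose_one_right]; group

theorem mul_inv_pow_eq_one_of_pow_eq {p : ℕ} (hp : p.Prime) {x y : G}
    (h : ⁅y⁻¹, x⁆ ∈ Subgroup.center G) (hxy : x ^ p = y ^ p) :
    (x * y⁻¹) ^ (if p = 2 then 4 else p) = 1 := by
  have hk : ⁅y⁻¹, x⁆ ^ p = 1 := by
    rw [← commutatorElement_pow_left_of_mem_center h, inv_pow, ← hxy,
      commutatorElement_eq_one_iff_commute]
    exact ((Commute.refl x).pow_left p).inv_left
  have hpow := mul_pow_of_commutatorElement_mem_center h p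
  rw [inv_pow, ← hxy, mul_inv_cancel_right] at hpow
  split_ifs with hp2
  · subst hp2
    rw [show 4 = 2 * 2 from rfl, pow_mul, hpow]
    simpa using hk
  · obtain ⟨m, hm⟩ := hp.odd_of_ne_two hp2
    have hchoose : p.choose 2 = p * m := by
      rw [Nat.choose_two_right, hm, Nat.add_sub_cancel, Nat.mul_div_assoc _ (dvd_mul_right 2 m),
        Nat.mul_div_cancel_left m two_pos]
    rw [hpow, hchoose, pow_mul, hk, one_pow]

end ClassTwo

namespace MulAut

variable {P : Type*} [Group P] {p n : ℕ} {α : MulAut P}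

/-- `x * (α x)⁻¹` is the commutator `⁅x, α⁆` computed in the holomorph `P ⋊ MulAut P`. -/
def commutatorMap (α : MulAut P) (x : P) : P := x * (α x)⁻¹

theorem apply_commutatorMap (α : MulAut P) (x : P) :
    α (α.commutatorMap x) = α.commutatorMap (α x) := by
  simp [commutatorMap]

theorem apply_eq_of_apply_commutatorMap (hP : IsPGroup p P) (hn : p.Coprime n) (hα : α ^ n = 1)
    {x : P} (hx : α (α.commutatorMap x) = α.commutatorMap x) : α x = x := by
  set c := α.commutatorMap x
  have hαx : α x = c⁻¹ * x := by simp [c, commutatorMap]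
  have hpow (k : ℕ) : (α ^ k) x = c⁻¹ ^ k * x := by
    induction k with
    | zero => simp
    | succ k ih =>
      rw [pow_succ', mul_apply, ih, map_mul, map_pow, map_inv, hx, hαx, pow_succ, mul_assoc]
  have hc : c⁻¹ = 1 := by
    refine hP.eq_one_of_pow_eq_one hn (mul_eq_right (b := x).mp ?_)
    rw [← hpow, hα, one_apply]
  rw [hαx, hc, one_mul]

theorem eq_one_of_apply_iterate_commutatorMap (hP : IsPGroup p P) (hn : p.Coprime n)
    (hα : α ^ n = 1) (j : ℕ) (h : ∀ x, α (α.commutatorMap^[j] x) = α.commutatorMap^[j] x) :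
    α = 1 := by
  induction j with
  | zero => exact MulEquiv.ext h
  | succ j ih =>
    refine ih fun x => apply_eq_of_apply_commutatorMap hP hn hα ?_
    rw [← Function.iterate_succ_apply' α.commutatorMap]
    exact h x

theorem commute_commutatorMap_of_apply_eq {t : P} (ht : α t = t)
    (htx : ∀ y, α ⁅t, y⁆ = ⁅t, y⁆) (x : P) : Commute t (α.commutatorMap x) := by
  have hconj : (α x)⁻¹ * t⁻¹ * α x = x⁻¹ * t⁻¹ * x := by
    have h := htx x⁻¹
    rw [map_commutatorElement, ht, map_inv] at h
    simpa only [commutatorElement_def, mul_assoc, mul_right_inj, inv_inv] using h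
  rw [← Commute.inv_left_iff]
  calc t⁻¹ * α.commutatorMap x = x * (x⁻¹ * t⁻¹ * x) * (α x)⁻¹ := by
        simp only [commutatorMap]; group
    _ = α.commutatorMap x * t⁻¹ := by rw [← hconj, commutatorMap]; group

noncomputable def restrict (α : MulAut P) (H : Subgroup P) [Finite H]
    (hH : ∀ x ∈ H, α x ∈ H) : MulAut H :=
  MulEquiv.ofBijective ((α.toMonoidHom.comp H.subtype).codRestrict H fun x => hH x x.2)
    (Finite.injective_iff_bijective.mp fun _ _ h =>
      Subtype.ext (α.injective (congrArg Subtype.val h)))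

section Restrict

variable {H : Subgroup P} [Finite H] {hH : ∀ x ∈ H, α x ∈ H}

@[simp]
theorem coe_restrict_apply (x : H) : (α.restrict H hH x : P) = α x := rfl

theorem coe_restrict_pow_apply (k : ℕ) (x : H) : ((α.restrict H hH ^ k) x : P) = (α ^ k) x := by
  induction k with
  | zero => rfl
  | succ k ih => rw [pow_succ', mul_apply, coe_restrict_apply, ih, pow_succ', mul_apply]

theorem restrict_pow_eq_one (hα : α ^ n = 1) : α.restrict H hH ^ n = 1 :=
  MulEquiv.ext fun x => Subtype.ext (by rw [coe_restrict_pow_apply, hα]; rfl)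

theorem apply_eq_of_restrict_eq_one (h : α.restrict H hH = 1) {x : P} (hx : x ∈ H) : α x = x :=
  congrArg Subtype.val (DFunLike.congr_fun h (⟨x, hx⟩ : H))

theorem restrict_apply_eq_of_pow_eq_one {e : ℕ} (h : ∀ x ∈ H, x ^ e = 1 → α x = x) (y : H)
    (hy : y ^ e = 1) : α.restrict H hH y = y :=
  Subtype.ext (h y y.2 (by simpa using congrArg Subtype.val hy))

end Restrict

/-- The situation of a minimal counterexample. -/
def FixesProperInvariantSubgroups (α : MulAut P) : Prop :=
  ∀ H : Subgroup P, H ≠ ⊤ → (∀ x ∈ H, α x ∈ H) → ∀ x ∈ H, α x = x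

theorem closure_range_commutatorMap_eq_top (hP : IsPGroup p P) (hn : p.Coprime n)
    (hα : α ^ n = 1) (hmin : α.FixesProperInvariantSubgroups) (hα1 : α ≠ 1) :
    Subgroup.closure (Set.range α.commutatorMap) = ⊤ := by
  by_contra hne
  have hinv : Subgroup.closure (Set.range α.commutatorMap) ≤
      (Subgroup.closure (Set.range α.commutatorMap)).comap α.toMonoidHom := by
    refine (Subgroup.closure_le _).mpr ?_
    rintro _ ⟨y, rfl⟩
    exact Subgroup.subset_closure ⟨α y, (apply_commutatorMap α y).symm⟩
  exact hα1 (MulEquiv.ext fun x => apply_eq_of_apply_commutatorMap hP hn hα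
    (hmin _ hne (fun _ hy => hinv hy) _ (Subgroup.subset_closure ⟨x, rfl⟩)))

section MinimalCounterexample

variable [Finite P] [Fact p.Prime]

theorem apply_eq_of_mem_commutator (hP : IsPGroup p P) (hmin : α.FixesProperInvariantSubgroups)
    {t : P} (ht : t ∈ commutator P) : α t = t := by
  cases subsingleton_or_nontrivial P
  · exact Subsingleton.elim _ _
  have := hP.isNilpotent
  refine hmin _ (Group.IsSolvable.commutator_lt_top_of_nontrivial P).ne (fun x hx => ?_) t ht
  exact Subgroup.characteristic_iff_le_comap.mp inferInstance α hx

theorem commutator_le_center (hP : IsPGroup p P) (hn : p.Coprime n) (hα : α ^ n = 1)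
    (hmin : α.FixesProperInvariantSubgroups) (hα1 : α ≠ 1) :
    commutator P ≤ Subgroup.center P := by
  intro t ht
  have hfix {s : P} (hs : s ∈ commutator P) : α s = s := apply_eq_of_mem_commutator hP hmin hs
  have hle : Subgroup.closure (Set.range α.commutatorMap) ≤ Subgroup.centralizer {t} := by
    refine (Subgroup.closure_le _).mpr ?_
    rintro _ ⟨x, rfl⟩
    refine Subgroup.mem_centralizer_singleton_iff.mpr
      (commute_commutatorMap_of_apply_eq (hfix ht) (fun y => hfix ?_) x).symm.eq
    exact Subgroup.commutator_mem_commutator (Subgroup.mem_top t) (Subgroup.mem_top y)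
  rw [closure_range_commutatorMap_eq_top hP hn hα hmin hα1] at hle
  exact Subgroup.mem_center_iff.mpr fun g =>
    Subgroup.mem_centralizer_singleton_iff.mp (hle (Subgroup.mem_top g))

theorem eq_one_of_fixesProperInvariantSubgroups (hP : IsPGroup p P) (hn : p.Coprime n)
    (hα : α ^ n = 1) (hmin : α.FixesProperInvariantSubgroups)
    (hfix : ∀ x : P, x ^ (if p = 2 then 4 else p) = 1 → α x = x) : α = 1 := by
  by_contra hα1
  have hC : MonoidHom.eqLocus α.toMonoidHom (MonoidHom.id P) ≠ ⊤ := fun h =>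
    hα1 (MulEquiv.ext ((Subgroup.eq_top_iff' _).mp h))
  obtain ⟨x, hx, hxp⟩ := hP.exists_pow_mem_of_ne_top hC
  have hcomm : ⁅(α x)⁻¹, x⁆ ∈ Subgroup.center P :=
    commutator_le_center hP hn hα hmin hα1
      (Subgroup.commutator_mem_commutator (Subgroup.mem_top _) (Subgroup.mem_top _))
  have hpow : x ^ p = (α x) ^ p := by rw [← map_pow]; exact hxp.symm
  exact hx (apply_eq_of_apply_commutatorMap hP hn hα
    (hfix _ (mul_inv_pow_eq_one_of_pow_eq Fact.out hcomm hpow)))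

end MinimalCounterexample

end MulAut

theorem IsPGroup.mulAut_eq_one_of_fixes_pow_eq_one {P : Type*} [Group P] [Finite P] {p n : ℕ}
    [Fact p.Prime] (hP : IsPGroup p P) (hn : p.Coprime n) {α : MulAut P} (hα : α ^ n = 1)
    (hfix : ∀ x : P, x ^ (if p = 2 then 4 else p) = 1 → α x = x) : α = 1 := by
  induction hcard : Nat.card P using Nat.strong_induction_on generalizing P with
  | _ N ih =>
  refine MulAut.eq_one_of_fixesProperInvariantSubgroups hP hn hα (fun H hH hHα x hx => ?_) hfix
  have hlt : Nat.card H < N :=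
    hcard ▸ (Subgroup.card_le_card_group H).lt_of_ne (mt (Subgroup.card_eq_iff_eq_top H).mp hH)
  exact MulAut.apply_eq_of_restrict_eq_one (ih _ hlt (hP.to_subgroup H)
    (MulAut.restrict_pow_eq_one (hH := hHα) hα)
    (MulAut.restrict_apply_eq_of_pow_eq_one fun y _ => hfix y) rfl) hx

theorem IsPGroup.apply_eq_of_fixes_pow_eq_one {P : Type*} [Group P] [Finite P] {p n : ℕ}
    [Fact p.Prime] (hP : IsPGroup p P) (hn : p.Coprime n) {α : MulAut P} (hα : α ^ n = 1)
    {H : Subgroup P} (hH : ∀ x ∈ H, α x ∈ H)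
    (hfix : ∀ x ∈ H, x ^ (if p = 2 then 4 else p) = 1 → α x = x) {x : P} (hx : x ∈ H) :
    α x = x :=
  MulAut.apply_eq_of_restrict_eq_one ((hP.to_subgroup H).mulAut_eq_one_of_fixes_pow_eq_one hn
    (MulAut.restrict_pow_eq_one (hH := hH) hα) (MulAut.restrict_apply_eq_of_pow_eq_one hfix)) hx

section SemidirectProduct

variable {G A : Type*} [Group G] [Group A] (φ : A →* MulAut G)

theorem commutatorElement_inl_inr (g : G) (a : A) :
    ⁅(inl g : G ⋊[φ] A), (inr a : G ⋊[φ] A)⁆ = inl ((φ a).commutatorMap g) := by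
  rw [commutatorElement_def, MulAut.commutatorMap, map_mul, map_inv inl, inl_aut, map_inv inr]
  group

theorem lnc_inl_replicate_inr (g : G) (a : A) (j : ℕ) :
    lnc (inl g : G ⋊[φ] A) (List.replicate j (inr a)) = inl ((φ a).commutatorMap^[j] g) := by
  induction j generalizing g with
  | zero => rfl
  | succ j ih =>
    rw [List.replicate_succ, lnc, List.foldl_cons, ← lnc, commutatorElement_inl_inr, ih,
      Function.iterate_succ_apply]

theorem inl_iterate_commutatorMap_mem_gammaGA (a : A) (k : ℕ) (g : G) :
    (inl ((φ a).commutatorMap^[k - 1] g) : G ⋊[φ] A) ∈ gammaGA φ k := by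
  refine Subgroup.subset_closure
    ⟨g, List.replicate (k - 1) (inr a), ?_, ?_, ⟨Finset.univ, ?_, ?_⟩,
      (lnc_inl_replicate_inr φ g a (k - 1)).symm⟩
  · rw [List.length_replicate]; omega
  · intro y hy
    exact Or.inr ⟨a, (List.mem_replicate.mp hy).2⟩
  · simp
  · intro i _
    exact ⟨a, by simp⟩

end SemidirectProduct

theorem map_eq_one_of_fixes_gammaGA {G A : Type*} [Group G] [Group A] [Finite G] {p n : ℕ}
    [Fact p.Prime] (hG : IsPGroup p G) (hn : p.Coprime n) (φ : A →* MulAut G) (k : ℕ)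
    (hfix : ∀ x ∈ gammaGA φ k, x ^ (if p = 2 then 4 else p) = 1 →
      ∀ a : A, (inr a : G ⋊[φ] A) * x * (inr a : G ⋊[φ] A)⁻¹ = x)
    {a : A} (ha : a ^ n = 1) : φ a = 1 := by
  set α := φ a
  have hα : α ^ n = 1 := by rw [← map_pow, ha, map_one]
  set K := Subgroup.closure (Set.range α.commutatorMap^[k - 1])
  have hKγ : K ≤ (gammaGA φ k).comap inl := by
    refine (Subgroup.closure_le _).mpr ?_
    rintro _ ⟨g, rfl⟩
    exact inl_iterate_commutatorMap_mem_gammaGA φ a k g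
  have hKα : K ≤ K.comap α.toMonoidHom := by
    refine (Subgroup.closure_le _).mpr ?_
    rintro _ ⟨g, rfl⟩
    exact Subgroup.subset_closure
      ⟨α g, (Function.Commute.iterate_right (f := α) α.apply_commutatorMap (k - 1) g).symm⟩
  have hKfix : ∀ g ∈ K, g ^ (if p = 2 then 4 else p) = 1 → α g = g := fun g hg hge =>
    inl_injective (by
      rw [inl_aut, map_inv inr]
      exact hfix _ (hKγ hg) (by rw [← map_pow, hge, map_one]) a)
  exact MulAut.eq_one_of_apply_iterate_commutatorMap hG hn hα (k - 1) fun g =>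
    hG.apply_eq_of_fixes_pow_eq_one hn hα (H := K) (fun _ hx => hKα hx) hKfix
      (Subgroup.subset_closure ⟨g, rfl⟩)

theorem stmt10_general {G A : Type*} [Group G] [Group A] [Finite G]
    (p : ℕ) [Fact p.Prime] (hG : IsPGroup p G)
    (φ : A →* MulAut G) (hφ : Function.Injective φ)
    (i : ℕ)
    (hfix : ∀ x ∈ gammaGA φ i, x ^ (if p = 2 then 4 else p) = 1 →
      ∀ a : A, (inr a : G ⋊[φ] A) * x * (inr a : G ⋊[φ] A)⁻¹ = x) :
    IsPGroup p A := by
  have : Finite A := Finite.of_injective φ hφ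
  refine IsPGroup.of_forall_prime_pow_eq_one fun q hq hqp a ha => hφ ?_
  rw [map_one]
  exact map_eq_one_of_fixes_gammaGA hG
    ((Nat.coprime_primes Fact.out hq).mpr hqp.symm) φ i hfix ha

theorem stmt10 {G A : Type*} [Group G] [Group A] [Finite G]
    (p : ℕ) [Fact p.Prime] (hG : IsPGroup p G)
    (φ : A →* MulAut G) (hφ : Function.Injective φ)
    (i : ℕ) (hi : 1 ≤ i)
    (hfix : ∀ x ∈ gammaGA φ i, x ^ (if p = 2 then 4 else p) = 1 →
      ∀ a : A, (inr a : G ⋊[φ] A) * x * (inr a : G ⋊[φ] A)⁻¹ = x) :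
    IsPGroup p A :=
  stmt10_general p hG φ hφ i hfix
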